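/- arXiv:1611.02542 — 6 statements merged into one kernel-verified Lean document; each statement's English description precedes it below -/
import Mathlib

section
/- Let ≻ be a continuous, strictly convex preference relation on a nonempty compact convex subset X of ℝⁿ. Then there exists a unique ξ ∈ X such that ξ ≽ x for all x ∈ X. -/
open Set in
/-- Theorem 1: a continuous, strictly convex preference relation on a nonempty compact convex
subset of `ℝⁿ` has a unique maximal element. -/
theorem stmt_5 {n : ℕ} (X : Set (EuclideanSpace ℝ (Fin n)))
    (hXne : X.Nonempty) (hXcomp : IsCompact X) (hXconv : Convex ℝ X)
    (r : EuclideanSpace ℝ (Fin n) → EuclideanSpace ℝ (Fin n) → Prop)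
    (asymm : ∀ x ∈ X, ∀ y ∈ X, r x y → ¬ r y x)
    (negtrans : ∀ x ∈ X, ∀ y ∈ X, r x y → ∀ z ∈ X, r x z ∨ r z y)
    (cont : IsOpen {p : X × X | r p.1.1 p.2.1})
    (strconv : ∀ x ∈ X, ∀ x' ∈ X, x ≠ x' → ∀ t ∈ Ioo (0:ℝ) 1,
      r (t • x + (1 - t) • x') x ∨ r (t • x + (1 - t) • x') x') :
    ∃! ξ, ξ ∈ X ∧ ∀ x ∈ X, ¬ r x ξ := by
  classical
  -- transitivity
  have trans : ∀ x ∈ X, ∀ y ∈ X, ∀ z ∈ X, r x y → r y z → r x z := by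
    intro x hx y hy z hz hxy hyz
    rcases negtrans x hx y hy hxy z hz with h | h
    · exact h
    · exact absurd h (asymm y hy z hz hyz)
  haveI : CompactSpace ↥X := isCompact_iff_compactSpace.mp hXcomp
  -- for each finite set, there is a point not dominated by any member
  have fin_max : ∀ u : Finset ↥X, ∃ m : ↥X, ∀ x ∈ u, ¬ r x.1 m.1 := by
    intro u
    induction u using Finset.induction_on with
    | empty => exact ⟨⟨hXne.some, hXne.some_mem⟩, fun x hx => absurd hx (by simp)⟩
    | @insert a s ha ih =>
      obtain ⟨m, hm⟩ := ih
      by_cases h : r a.1 m.1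
      · refine ⟨a, ?_⟩
        intro x hx hxa
        rcases Finset.mem_insert.mp hx with rfl | hx
        · exact asymm x.1 x.2 x.1 x.2 hxa hxa
        · exact hm x hx (trans x.1 x.2 a.1 a.2 m.1 m.2 hxa h)
      · refine ⟨m, ?_⟩
        intro x hx
        rcases Finset.mem_insert.mp hx with rfl | hx
        · exact h
        · exact hm x hx
  -- the closed sets
  set F : ↥X → Set ↥X := fun x => {y | ¬ r x.1 y.1} with hF
  have hFc : ∀ x : ↥X, IsClosed (F x) := by
    intro x
    have : IsOpen {y : ↥X | r x.1 y.1} := by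
      have hcont : Continuous (fun y : ↥X => ((x, y) : ↥X × ↥X)) :=
        Continuous.prodMk continuous_const continuous_id
      exact cont.preimage hcont
    simpa [F, Set.compl_setOf] using this.isClosed_compl
  have key : (Set.univ ∩ ⋂ x : ↥X, F x).Nonempty := by
    apply isCompact_univ.inter_iInter_nonempty F hFc
    intro u
    obtain ⟨m, hm⟩ := fin_max u
    refine ⟨m, Set.mem_inter trivial ?_⟩
    simp only [Set.mem_iInter]
    exact fun x hx => hm x hx
  obtain ⟨ξ, -, hξ⟩ := key
  simp only [Set.mem_iInter] at hξ
  refine ⟨ξ.1, ⟨ξ.2, fun x hx => hξ ⟨x, hx⟩⟩, ?_⟩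
  rintro y ⟨hyX, hy⟩
  by_contra hne
  have hmid : (1/2 : ℝ) • y + (1 - 1/2 : ℝ) • (ξ : EuclideanSpace ℝ (Fin n)) ∈ X :=
    hXconv hyX ξ.2 (by norm_num) (by norm_num) (by norm_num)
  rcases strconv y hyX ξ.1 ξ.2 (fun h => hne (h ▸ rfl)) (1/2) (by norm_num) with h | h
  · exact hy _ hmid h
  · exact hξ ⟨_, hmid⟩ h
end

section
/- Let ≻ be a uniformly rotund preference relation on a compact subset X of ℝⁿ. Then the map Γ sending each nonempty compact convex subset S of X to its unique ≻-maximal element is uniformly continuous with respect to the Hausdorff metric: for every ε > 0, there is δ > 0 such that for all nonempty compact convex S, S' ⊆ X with Hausdorff distance ρ_H(S, S') < δ, the maximal elements ξ of S and ξ' of S' satisfy ‖ξ − ξ'‖ ≤ ε. -/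
open Set Metric in
/-- If `≻` is a uniformly rotund preference relation on a compact `X ⊆ ℝⁿ`, then the map
sending a nonempty compact convex subset of `X` to its `≻`-maximal element is uniformly
continuous for the Hausdorff metric. -/
theorem stmt_10 {n : ℕ} (X : Set (EuclideanSpace ℝ (Fin n))) (hXcomp : IsCompact X)
    (r : EuclideanSpace ℝ (Fin n) → EuclideanSpace ℝ (Fin n) → Prop)
    (asymm : ∀ x ∈ X, ∀ y ∈ X, r x y → ¬ r y x)
    (negtrans : ∀ x ∈ X, ∀ y ∈ X, r x y → ∀ z ∈ X, r x z ∨ r z y)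
    (hXrot : ∀ ε > (0:ℝ), ∃ δ > (0:ℝ), ∀ x ∈ X, ∀ x' ∈ X, ε ≤ ‖x - x'‖ →
      ball ((1/2 : ℝ) • (x + x')) δ ⊆ X)
    (hrot : ∀ ε > (0:ℝ), ∃ δ > (0:ℝ), ∀ x ∈ X, ∀ x' ∈ X, ε ≤ ‖x - x'‖ →
      ∀ z : EuclideanSpace ℝ (Fin n), ‖z‖ < δ →
        r ((1/2 : ℝ) • (x + x') + z) x ∨ r ((1/2 : ℝ) • (x + x') + z) x') :
    ∀ ε > (0:ℝ), ∃ δ > (0:ℝ), ∀ S S' : Set (EuclideanSpace ℝ (Fin n)),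
      S ⊆ X → S.Nonempty → IsCompact S → Convex ℝ S →
      S' ⊆ X → S'.Nonempty → IsCompact S' → Convex ℝ S' →
      hausdorffDist S S' < δ →
      ∀ ξ ∈ S, (∀ x ∈ S, ¬ r x ξ) → ∀ ξ' ∈ S', (∀ x ∈ S', ¬ r x ξ') →
        ‖ξ - ξ'‖ ≤ ε := by
  intro ε hε
  obtain ⟨δ, hδ, hδr⟩ := hrot ε hε
  refine ⟨δ, hδ, ?_⟩
  intro S S' hSX hSne hScomp hSconv hS'X hS'ne hS'comp hS'conv hH
  intro ξ hξ hξmax ξ' hξ' hξ'max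
  by_contra hcon
  push_neg at hcon
  have hεle : ε ≤ ‖ξ - ξ'‖ := le_of_lt hcon
  have hξX : ξ ∈ X := hSX hξ
  have hξ'X : ξ' ∈ X := hS'X hξ'
  have hfin : EMetric.hausdorffEdist S S' ≠ ⊤ :=
    Metric.hausdorffEdist_ne_top_of_nonempty_of_bounded hSne hS'ne
      (hScomp.isBounded) (hS'comp.isBounded)
  -- pick y ∈ S near ξ'
  obtain ⟨y, hyS, hy⟩ := Metric.exists_dist_lt_of_hausdorffDist_lt' hξ' hH hfin
  -- pick y' ∈ S' near ξ
  obtain ⟨y', hy'S', hy'⟩ := Metric.exists_dist_lt_of_hausdorffDist_lt hξ hH hfin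
  set w : EuclideanSpace ℝ (Fin n) := (1/2 : ℝ) • (ξ + y) with hw
  set w' : EuclideanSpace ℝ (Fin n) := (1/2 : ℝ) • (ξ' + y') with hw'
  have hwS : w ∈ S := by
    have := hSconv hξ hyS (by norm_num : (0:ℝ) ≤ 1/2) (by norm_num : (0:ℝ) ≤ 1/2)
      (by norm_num : (1/2 : ℝ) + 1/2 = 1)
    rw [hw]
    convert this using 1
    module
  have hw'S' : w' ∈ S' := by
    have := hS'conv hξ' hy'S' (by norm_num : (0:ℝ) ≤ 1/2) (by norm_num : (0:ℝ) ≤ 1/2)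
      (by norm_num : (1/2 : ℝ) + 1/2 = 1)
    rw [hw']
    convert this using 1
    module
  have hwX : w ∈ X := hSX hwS
  have hw'X : w' ∈ X := hS'X hw'S'
  -- w ≻ ξ or w ≻ ξ'
  have h1 : r w ξ ∨ r w ξ' := by
    have hz : ‖(1/2 : ℝ) • (y - ξ')‖ < δ := by
      rw [norm_smul]
      have : ‖y - ξ'‖ < δ := by
        rw [← dist_eq_norm]; exact hy
      calc ‖(1/2 : ℝ)‖ * ‖y - ξ'‖ = (1/2) * ‖y - ξ'‖ := by
            rw [Real.norm_eq_abs]; norm_num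
        _ < δ := by nlinarith [norm_nonneg (y - ξ')]
    have := hδr ξ hξX ξ' hξ'X hεle ((1/2 : ℝ) • (y - ξ')) hz
    have heq : (1/2 : ℝ) • (ξ + ξ') + (1/2 : ℝ) • (y - ξ') = w := by
      rw [hw]; module
    rwa [heq] at this
  have h2 : r w' ξ ∨ r w' ξ' := by
    have hz : ‖(1/2 : ℝ) • (y' - ξ)‖ < δ := by
      rw [norm_smul]
      have : ‖y' - ξ‖ < δ := by
        rw [← dist_eq_norm, dist_comm]; exact hy'
      calc ‖(1/2 : ℝ)‖ * ‖y' - ξ‖ = (1/2) * ‖y' - ξ‖ := by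
            rw [Real.norm_eq_abs]; norm_num
        _ < δ := by nlinarith [norm_nonneg (y' - ξ)]
    have := hδr ξ hξX ξ' hξ'X hεle ((1/2 : ℝ) • (y' - ξ)) hz
    have heq : (1/2 : ℝ) • (ξ + ξ') + (1/2 : ℝ) • (y' - ξ) = w' := by
      rw [hw']; module
    rwa [heq] at this
  have hwξ' : r w ξ' := h1.resolve_left (hξmax w hwS)
  have hw'ξ : r w' ξ := h2.resolve_right (hξ'max w' hw'S')
  have hww' : r w w' :=
    (negtrans w hwX ξ' hξ'X hwξ' w' hw'X).resolve_right (hξ'max w' hw'S')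
  have hw'w : r w' w :=
    (negtrans w' hw'X ξ hξX hw'ξ w hwX).resolve_right (hξmax w hwS)
  exact asymm w hwX w' hw'X hww' hw'w
end

section
/- Let ≻ be a rotund preference relation on a compact subset X of ℝⁿ. Then the map Γ sending each nonempty compact convex subset S of X to its unique ≻-maximal element is continuous with respect to the Hausdorff metric: for each such S with maximal element ξ and each ε > 0, there is δ > 0 such that every nonempty compact convex S' ⊆ X with ρ_H(S, S') < δ has its maximal element ξ' satisfying ‖ξ − ξ'‖ ≤ ε. -/
/-!
Fix `ξ` and let `δ` be the rotundity radius of `≻` at `ξ` for the given `ε`. If `S'` is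
`δ`-close to `S` and its maximal element `ξ'` were `ε`-far from `ξ`, pick `s ∈ S` near `ξ'` and
`s' ∈ S'` near `ξ`. The midpoints `p = (ξ + s)/2 ∈ S` and `q = (s' + ξ')/2 ∈ S'` are
`δ`-perturbations of `(ξ + ξ')/2`, so each of them is preferred to `ξ` or to `ξ'`. Maximality
forces `p ≻ ξ'` and `q ≻ ξ`, and negative transitivity then gives both `q ≻ p` and `p ≻ q`.
-/

open Metric

section Preference

variable {α : Type*} {X : Set α} {r : α → α → Prop}

theorem not_rel_maxima_of_rel_maxima
    (asymm : ∀ x ∈ X, ∀ y ∈ X, r x y → ¬ r y x)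
    (negtrans : ∀ x ∈ X, ∀ y ∈ X, r x y → ∀ z ∈ X, r x z ∨ r z y)
    {S S' : Set α} (hSX : S ⊆ X) (hS'X : S' ⊆ X) {ξ ξ' p q : α}
    (hξ : ξ ∈ S) (hξmax : ∀ x ∈ S, ¬ r x ξ) (hξ' : ξ' ∈ S') (hξ'max : ∀ x ∈ S', ¬ r x ξ')
    (hp : p ∈ S) (hq : q ∈ S') (hpr : r p ξ ∨ r p ξ') :
    ¬ (r q ξ ∨ r q ξ') := by
  intro hqr
  have hpξ' : r p ξ' := hpr.resolve_left (hξmax p hp)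
  have hqξ : r q ξ := hqr.resolve_right (hξ'max q hq)
  have hqp : r q p := (negtrans q (hS'X hq) ξ (hSX hξ) hqξ p (hSX hp)).resolve_right (hξmax p hp)
  have hpq : r p q :=
    (negtrans p (hSX hp) ξ' (hS'X hξ') hpξ' q (hS'X hq)).resolve_right (hξ'max q hq)
  exact asymm p (hSX hp) q (hS'X hq) hpq hqp

end Preference

theorem Convex.half_smul_add_mem {E : Type*} [AddCommGroup E] [Module ℝ E] {S : Set E}
    (hS : Convex ℝ S) {x y : E} (hx : x ∈ S) (hy : y ∈ S) : (1/2 : ℝ) • (x + y) ∈ S := by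
  simpa only [smul_add] using hS hx hy (by norm_num) (by norm_num) (by norm_num)

theorem half_smul_add_eq_add_of_dist_lt {E : Type*} [NormedAddCommGroup E] [NormedSpace ℝ E]
    (x : E) {y y' : E} {δ : ℝ} (h : dist y' y < δ) :
    ∃ z : E, ‖z‖ < δ ∧ (1/2 : ℝ) • (x + y') = (1/2 : ℝ) • (x + y) + z := by
  refine ⟨(1/2 : ℝ) • (y' - y), ?_, by module⟩
  rw [norm_smul, ← dist_eq_norm, Real.norm_of_nonneg (by norm_num)]
  linarith [dist_nonneg (x := y') (y := y)]

theorem IsCompact.exists_dist_lt_of_hausdorffDist_lt {M : Type*} [PseudoMetricSpace M]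
    {S S' : Set M} (hS : IsCompact S) (hS' : IsCompact S') (hS'ne : S'.Nonempty)
    {x : M} (hx : x ∈ S) {δ : ℝ} (h : hausdorffDist S S' < δ) : ∃ y ∈ S', dist x y < δ :=
  Metric.exists_dist_lt_of_hausdorffDist_lt hx h <|
    hausdorffEDist_ne_top_of_nonempty_of_bounded ⟨x, hx⟩ hS'ne hS.isBounded hS'.isBounded

open Set Metric in
theorem stmt_11_general {n : ℕ} (X : Set (EuclideanSpace ℝ (Fin n)))
    (r : EuclideanSpace ℝ (Fin n) → EuclideanSpace ℝ (Fin n) → Prop)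
    (asymm : ∀ x ∈ X, ∀ y ∈ X, r x y → ¬ r y x)
    (negtrans : ∀ x ∈ X, ∀ y ∈ X, r x y → ∀ z ∈ X, r x z ∨ r z y)
    (hrot : ∀ x ∈ X, ∀ ε > (0:ℝ), ∃ δ > (0:ℝ), ∀ x' ∈ X, ε ≤ ‖x - x'‖ →
      ∀ z : EuclideanSpace ℝ (Fin n), ‖z‖ < δ →
        r ((1/2 : ℝ) • (x + x') + z) x ∨ r ((1/2 : ℝ) • (x + x') + z) x') :
    ∀ S : Set (EuclideanSpace ℝ (Fin n)), S ⊆ X → S.Nonempty → IsCompact S → Convex ℝ S →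
      ∀ ξ ∈ S, (∀ x ∈ S, ¬ r x ξ) → ∀ ε > (0:ℝ), ∃ δ > (0:ℝ),
        ∀ S' : Set (EuclideanSpace ℝ (Fin n)),
          S' ⊆ X → S'.Nonempty → IsCompact S' → Convex ℝ S' →
          hausdorffDist S S' < δ →
          ∀ ξ' ∈ S', (∀ x ∈ S', ¬ r x ξ') → ‖ξ - ξ'‖ ≤ ε := by
  intro S hSX hSne hScomp hSconv ξ hξ hξmax ε hε
  obtain ⟨δ, hδ, hδrot⟩ := hrot ξ (hSX hξ) ε hε
  refine ⟨δ, hδ, fun S' hS'X hS'ne hS'comp hS'conv hH ξ' hξ' hξ'max => ?_⟩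
  by_contra! hfar
  have hrot' := hδrot ξ' (hS'X hξ') hfar.le
  obtain ⟨s', hs', hs'ξ⟩ := hScomp.exists_dist_lt_of_hausdorffDist_lt hS'comp hS'ne hξ hH
  obtain ⟨s, hs, hsξ'⟩ := hS'comp.exists_dist_lt_of_hausdorffDist_lt hScomp hSne hξ'
    (by rwa [hausdorffDist_comm])
  have hp : r ((1/2 : ℝ) • (ξ + s)) ξ ∨ r ((1/2 : ℝ) • (ξ + s)) ξ' := by
    obtain ⟨z, hz, hpz⟩ := half_smul_add_eq_add_of_dist_lt ξ (dist_comm ξ' s ▸ hsξ')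
    exact hpz ▸ hrot' z hz
  have hq : r ((1/2 : ℝ) • (s' + ξ')) ξ ∨ r ((1/2 : ℝ) • (s' + ξ')) ξ' := by
    obtain ⟨z, hz, hqz⟩ := half_smul_add_eq_add_of_dist_lt ξ' (dist_comm ξ s' ▸ hs'ξ)
    rw [add_comm s', hqz, add_comm ξ']
    exact hrot' z hz
  exact not_rel_maxima_of_rel_maxima asymm negtrans hSX hS'X hξ hξmax hξ' hξ'max
    (hSconv.half_smul_add_mem hξ hs) (hS'conv.half_smul_add_mem hs' hξ') hp hq

open Set Metric in
/-- If `≻` is a rotund preference relation on a compact `X ⊆ ℝⁿ`, then the map sending a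
nonempty compact convex subset of `X` to its `≻`-maximal element is continuous for the
Hausdorff metric. -/
theorem stmt_11 {n : ℕ} (X : Set (EuclideanSpace ℝ (Fin n))) (hXcomp : IsCompact X)
    (r : EuclideanSpace ℝ (Fin n) → EuclideanSpace ℝ (Fin n) → Prop)
    (asymm : ∀ x ∈ X, ∀ y ∈ X, r x y → ¬ r y x)
    (negtrans : ∀ x ∈ X, ∀ y ∈ X, r x y → ∀ z ∈ X, r x z ∨ r z y)
    (hXrot : ∀ x ∈ X, ∀ ε > (0:ℝ), ∃ δ > (0:ℝ), ∀ x' ∈ X, ε ≤ ‖x - x'‖ →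
      ball ((1/2 : ℝ) • (x + x')) δ ⊆ X)
    (hrot : ∀ x ∈ X, ∀ ε > (0:ℝ), ∃ δ > (0:ℝ), ∀ x' ∈ X, ε ≤ ‖x - x'‖ →
      ∀ z : EuclideanSpace ℝ (Fin n), ‖z‖ < δ →
        r ((1/2 : ℝ) • (x + x') + z) x ∨ r ((1/2 : ℝ) • (x + x') + z) x') :
    ∀ S : Set (EuclideanSpace ℝ (Fin n)), S ⊆ X → S.Nonempty → IsCompact S → Convex ℝ S →
      ∀ ξ ∈ S, (∀ x ∈ S, ¬ r x ξ) → ∀ ε > (0:ℝ), ∃ δ > (0:ℝ),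
        ∀ S' : Set (EuclideanSpace ℝ (Fin n)),
          S' ⊆ X → S'.Nonempty → IsCompact S' → Convex ℝ S' →
          hausdorffDist S S' < δ →
          ∀ ξ' ∈ S', (∀ x ∈ S', ¬ r x ξ') → ‖ξ - ξ'‖ ≤ ε :=
  stmt_11_general X r asymm negtrans hrot
end

section
/- Every continuous, strictly convex preference relation on a compact convex subset X of ℝⁿ is uniformly rotund in the following sense: for each ε > 0 there exists δ > 0 such that for all x, x' ∈ X with ‖x − x'‖ ≥ ε and all z ∈ ℝⁿ with ‖z‖ < δ and (x + x')/2 + z ∈ X, either (x + x')/2 + z ≻ x or (x + x')/2 + z ≻ x'. -/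
open Filter Topology

open Set in
/-- Every continuous, strictly convex preference relation on a compact convex `X ⊆ ℝⁿ`
is uniformly rotund (Proposition 5, classical version). -/
theorem stmt_12 {n : ℕ} (X : Set (EuclideanSpace ℝ (Fin n)))
    (hXcomp : IsCompact X) (hXconv : Convex ℝ X)
    (r : EuclideanSpace ℝ (Fin n) → EuclideanSpace ℝ (Fin n) → Prop)
    (asymm : ∀ x ∈ X, ∀ y ∈ X, r x y → ¬ r y x)
    (negtrans : ∀ x ∈ X, ∀ y ∈ X, r x y → ∀ z ∈ X, r x z ∨ r z y)
    (cont : IsOpen {p : X × X | r p.1.1 p.2.1})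
    (strconv : ∀ x ∈ X, ∀ x' ∈ X, x ≠ x' → ∀ t ∈ Ioo (0:ℝ) 1,
      r (t • x + (1 - t) • x') x ∨ r (t • x + (1 - t) • x') x') :
    ∀ ε > (0:ℝ), ∃ δ > (0:ℝ), ∀ x ∈ X, ∀ x' ∈ X, ε ≤ ‖x - x'‖ →
      ∀ z : EuclideanSpace ℝ (Fin n), ‖z‖ < δ → (1/2 : ℝ) • (x + x') + z ∈ X →
        r ((1/2 : ℝ) • (x + x') + z) x ∨ r ((1/2 : ℝ) • (x + x') + z) x' := by
  intro ε hε
  by_contra hcon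
  push_neg at hcon
  choose x hx x' hx' hsep z hz hmem h1 h2 using
    fun k : ℕ => hcon (1 / (k + 1)) (by positivity)
  obtain ⟨a, ha, φ, hφ, hxa⟩ := hXcomp.tendsto_subseq hx
  obtain ⟨b, hb, ψ, hψ, hx'b⟩ := hXcomp.tendsto_subseq (fun k => hx' (φ k))
  set σ : ℕ → ℕ := φ ∘ ψ with hσ
  have hσmono : StrictMono σ := hφ.comp hψ
  have hxa' : Tendsto (fun k => x (σ k)) atTop (𝓝 a) := hxa.comp hψ.tendsto_atTop
  have hx'b' : Tendsto (fun k => x' (σ k)) atTop (𝓝 b) := hx'b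
  have hz0 : Tendsto (fun k => z (σ k)) atTop (𝓝 0) := by
    refine squeeze_zero_norm (fun k => ?_) tendsto_one_div_add_atTop_nhds_zero_nat
    refine le_trans (hz (σ k)).le ?_
    apply one_div_le_one_div_of_le (by positivity)
    have := hσmono.le_apply (x := k)
    have := (Nat.cast_le (α := ℝ)).mpr this
    push_cast at this ⊢
    linarith
  have hab : ε ≤ ‖a - b‖ := by
    have : Tendsto (fun k => ‖x (σ k) - x' (σ k)‖) atTop (𝓝 ‖a - b‖) :=
      (hxa'.sub hx'b').norm
    exact ge_of_tendsto this (Eventually.of_forall fun k => hsep (σ k))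
  have haneb : a ≠ b := by
    intro h
    rw [h, sub_self, norm_zero] at hab
    linarith
  have hmX : (1/2 : ℝ) • (a + b) ∈ X := by
    have := hXconv ha hb (by norm_num : (0:ℝ) ≤ 1/2) (by norm_num : (0:ℝ) ≤ 1/2)
      (by norm_num)
    rwa [smul_add]
  have hmlim : Tendsto (fun k => (1/2 : ℝ) • (x (σ k) + x' (σ k)) + z (σ k)) atTop
      (𝓝 ((1/2 : ℝ) • (a + b))) := by
    have := ((hxa'.add hx'b').const_smul (1/2 : ℝ)).add hz0
    simpa using this
  have hr := strconv a ha b hb haneb (1/2) ⟨by norm_num, by norm_num⟩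
  rw [show (1 - (1/2 : ℝ)) = 1/2 by norm_num, ← smul_add] at hr
  rcases hr with hr | hr
  · set P : X × X := (⟨_, hmX⟩, ⟨a, ha⟩) with hP
    have hPmem : P ∈ {p : X × X | r p.1.1 p.2.1} := hr
    have hQ : Tendsto (fun k => ((⟨_, hmem (σ k)⟩ : X), (⟨x (σ k), hx (σ k)⟩ : X)))
        atTop (𝓝 P) := by
      refine Tendsto.prodMk_nhds ?_ ?_ <;> rw [tendsto_subtype_rng]
      · exact hmlim
      · exact hxa'
    obtain ⟨k, hk⟩ := (hQ.eventually (cont.mem_nhds hPmem)).exists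
    exact h1 (σ k) hk
  · set P : X × X := (⟨_, hmX⟩, ⟨b, hb⟩) with hP
    have hPmem : P ∈ {p : X × X | r p.1.1 p.2.1} := hr
    have hQ : Tendsto (fun k => ((⟨_, hmem (σ k)⟩ : X), (⟨x' (σ k), hx' (σ k)⟩ : X)))
        atTop (𝓝 P) := by
      refine Tendsto.prodMk_nhds ?_ ?_ <;> rw [tendsto_subtype_rng]
      · exact hmlim
      · exact hx'b'
    obtain ⟨k, hk⟩ := (hQ.eventually (cont.mem_nhds hPmem)).exists
    exact h2 (σ k) hk
end

section
/- If every continuous predicate on [0,1] is uniformly continuous, and B ⊆ 2* is a bar closed under extensions, then B is uniform. -/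
open Set in
/-- If every continuous predicate on `[0,1]` is uniformly continuous, then every bar
closed under extensions is uniform. -/
theorem stmt_15
    (UCT : ∀ P : ℝ → ℝ → ℝ → Prop,
      (∀ x ∈ Icc (0:ℝ) 1, ∀ ε > (0:ℝ), ∃ δ > (0:ℝ), P x ε δ) →
      (∀ x ∈ Icc (0:ℝ) 1, ∀ y ∈ Icc (0:ℝ) 1, ∀ ε > (0:ℝ), ∀ δ δ' : ℝ,
        P x ε δ → |x - y| < δ' → δ' < δ → P y ε (δ - δ')) →
      ∀ ε > (0:ℝ), ∃ δ > (0:ℝ), ∀ x ∈ Icc (0:ℝ) 1, P x ε δ)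
    (B : Set (List Bool))
    (hbar : ∀ α : ℕ → Bool, ∃ N : ℕ, (List.ofFn fun i : Fin N => α i) ∈ B)
    (hext : ∀ u v : List Bool, u ∈ B → u <+: v → v ∈ B) :
    ∃ N : ℕ, ∀ l : List Bool, l.length = N → ∃ u ∈ B, u <+: l := by
  classical
  by_contra hcon
  push_neg at hcon
  -- T l : no initial segment of l is in B
  set T : List Bool → Prop := fun l => ∀ u ∈ B, ¬ u <+: l with hT
  have Tpre : ∀ l₁ l₂ : List Bool, l₁ <+: l₂ → T l₂ → T l₁ :=
    fun l₁ l₂ hp h u hu hup => h u hu (hup.trans hp)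
  -- E l : l has arbitrarily long extensions in T
  set E : List Bool → Prop := fun l => ∀ n, ∃ m : List Bool, m.length = n ∧ T (l ++ m) with hE
  have step : ∀ l, E l → ∃ b : Bool, E (l ++ [b]) := by
    intro l hl
    by_contra hb
    push_neg at hb
    simp only [hE] at hb
    push_neg at hb
    obtain ⟨nt, hnt⟩ := hb true
    obtain ⟨nf, hnf⟩ := hb false
    obtain ⟨m, hm, hTm⟩ := hl (max nt nf + 1)
    match m, hm with
    | b :: m', hm =>
      have hm' : m'.length = max nt nf := by simpa using hm
      cases b with
      | true =>
        have hlen : (m'.take nt).length = nt := by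
          rw [List.length_take, hm']; exact min_eq_left (le_max_left _ _)
        have hpre : l ++ [true] ++ m'.take nt <+: l ++ true :: m' := by
          rw [List.append_assoc]
          exact (List.prefix_append_right_inj l).mpr
            (List.cons_prefix_cons.mpr ⟨rfl, List.take_prefix _ _⟩)
        exact hnt (m'.take nt) hlen (Tpre _ _ hpre hTm)
      | false =>
        have hlen : (m'.take nf).length = nf := by
          rw [List.length_take, hm']; exact min_eq_left (le_max_right _ _)
        have hpre : l ++ [false] ++ m'.take nf <+: l ++ false :: m' := by
          rw [List.append_assoc]
          exact (List.prefix_append_right_inj l).mpr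
            (List.cons_prefix_cons.mpr ⟨rfl, List.take_prefix _ _⟩)
        exact hnf (m'.take nf) hlen (Tpre _ _ hpre hTm)
  have hE0 : E [] := by
    intro n
    obtain ⟨l, hl, hTl⟩ := hcon n
    exact ⟨l, hl, by simpa using hTl⟩
  -- build the branch
  let F : ℕ → {l : List Bool // E l} := fun n =>
    Nat.rec ⟨[], hE0⟩
      (fun _ p => ⟨p.1 ++ [Classical.choose (step p.1 p.2)],
        Classical.choose_spec (step p.1 p.2)⟩) n
  let α : ℕ → Bool := fun n => Classical.choose (step (F n).1 (F n).2)
  have key : ∀ n, (F (n+1)).1 = (F n).1 ++ [α n] := fun n => rfl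
  have ofFn_eq : ∀ N, (List.ofFn fun i : Fin N => α i) = (F N).1 := by
    intro N
    induction N with
    | zero => rfl
    | succ N ih =>
      rw [List.ofFn_succ', key N, ← ih, List.concat_eq_append]
  obtain ⟨N, hN⟩ := hbar α
  rw [ofFn_eq] at hN
  obtain ⟨m, hm0, hTm⟩ := (F N).2 0
  rw [List.length_eq_zero_iff.mp hm0, List.append_nil] at hTm
  exact hTm (F N).1 hN (List.prefix_refl _)
end

section
/- Let ≻ be a continuous, strictly convex preference relation on a compact convex subset X of ℝⁿ (n ≥ 2) with π₁(X) = [a, b], where π₁ is projection onto the first coordinate. Define s ≻' t on [a, b] by: there exists x ∈ X with π₁(x) = s such that x ≻ y for all y ∈ X with π₁(y) = t. Then ≻' is a strictly convex relation on [a, b]: for all s ≠ t in [a,b] and u strictly between s and t, either u ≻' s or u ≻' t. -/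
/-!
Take `≻`-maximal points `xₛ`, `xₜ` of the slices over `s` and `t` and write `u = θ s + (1 - θ) t`
with `θ ∈ (0,1)`. The point `z = θ xₛ + (1 - θ) xₜ` lies in the slice over `u`, and by strict
convexity it beats `xₛ` or `xₜ`. By negative transitivity it then beats every point not beating
that maximal point, i.e. the whole corresponding slice.
-/

open Set

theorem Set.Finite.exists_forall_not_rel {β : Type*} {r : β → β → Prop} {S : Set β}
    (hS : S.Finite) (hne : S.Nonempty) (irrefl : ∀ x ∈ S, ¬ r x x)
    (trans : ∀ x ∈ S, ∀ y ∈ S, ∀ z ∈ S, r x y → r y z → r x z) :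
    ∃ m ∈ S, ∀ y ∈ S, ¬ r y m := by
  have : Finite S := hS
  let R : S → S → Prop := fun x y => r x y
  have : IsTrans S R := ⟨fun x y z => trans x x.2 y y.2 z z.2⟩
  have : Std.Irrefl R := ⟨fun x => irrefl x x.2⟩
  obtain ⟨m, -, hm⟩ :=
    (Finite.wellFounded_of_trans_of_irrefl R).has_min univ (@univ_nonempty _ hne.to_subtype)
  exact ⟨m, m.2, fun y hy => hm ⟨y, hy⟩ trivial⟩

section Relation

variable {β : Type*} {r : β → β → Prop}

theorem rel_trans_of_asymm_of_negTrans (asymm : ∀ x y, r x y → ¬ r y x)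
    (negtrans : ∀ x y, r x y → ∀ z, r x z ∨ r z y) {x y z : β} (hxy : r x y) (hyz : r y z) :
    r x z :=
  (negtrans x y hxy z).resolve_right (asymm y z hyz)

/-- The maximal element theorem. -/
theorem IsCompact.exists_forall_not_rel [TopologicalSpace β] {K : Set β} (hK : IsCompact K)
    (hne : K.Nonempty) (asymm : ∀ x y, r x y → ¬ r y x)
    (negtrans : ∀ x y, r x y → ∀ z, r x z ∨ r z y) (cont : IsOpen {p : β × β | r p.1 p.2}) :
    ∃ m ∈ K, ∀ y ∈ K, ¬ r y m := by
  have hclosed (y : K) : IsClosed {x | ¬ r y x} :=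
    (cont.preimage (continuous_const.prodMk continuous_id)).isClosed_compl
  have hfip (u : Finset K) : (K ∩ ⋂ y ∈ u, {x | ¬ r y x}).Nonempty := by
    rcases u.eq_empty_or_nonempty with rfl | hu
    · simpa using hne
    obtain ⟨m, hmu, hm⟩ := (u.finite_toSet).exists_forall_not_rel (r := fun x y : K => r x y)
      hu (fun x _ h => asymm _ _ h h)
      (fun _ _ _ _ _ _ => rel_trans_of_asymm_of_negTrans asymm negtrans)
    exact ⟨m, m.2, mem_iInter₂.2 fun y hy => hm y hy⟩
  obtain ⟨m, hmK, hm⟩ := hK.inter_iInter_nonempty _ hclosed hfip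
  exact ⟨m, hmK, fun y hy => mem_iInter.1 hm ⟨y, hy⟩⟩

end Relation

theorem IsCompact.exists_forall_not_rel_of_subset {α : Type*} [TopologicalSpace α] {X K : Set α}
    (hKX : K ⊆ X) (hK : IsCompact K) (hne : K.Nonempty) {r : α → α → Prop}
    (asymm : ∀ x ∈ X, ∀ y ∈ X, r x y → ¬ r y x)
    (negtrans : ∀ x ∈ X, ∀ y ∈ X, r x y → ∀ z ∈ X, r x z ∨ r z y)
    (cont : IsOpen {p : X × X | r p.1.1 p.2.1}) :
    ∃ m ∈ K, ∀ y ∈ K, ¬ r y m := by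
  have hK' : IsCompact ((↑) ⁻¹' K : Set X) := by
    rwa [Subtype.isCompact_iff, Subtype.image_preimage_coe, inter_eq_right.2 hKX]
  obtain ⟨x, hx⟩ := hne
  obtain ⟨m, hmK, hm⟩ := hK'.exists_forall_not_rel (r := fun x y : X => r x y)
    ⟨⟨x, hKX hx⟩, hx⟩ (fun x y => asymm x x.2 y y.2)
    (fun x y h z => negtrans x x.2 y y.2 h z z.2) cont
  exact ⟨m, hmK, fun y hy => hm ⟨y, hKX hy⟩ hy⟩

/-- The relation `≻'`, with a general `f` in place of `π₁`. -/
def FibreRel {E : Type*} (X : Set E) (f : E → ℝ) (r : E → E → Prop) (s t : ℝ) : Prop :=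
  ∃ x ∈ X, f x = s ∧ ∀ y ∈ X, f y = t → r x y

theorem fibreRel_or_of_mem_openSegment {E : Type*} [AddCommGroup E] [Module ℝ E] {X : Set E}
    (hX : Convex ℝ X) {r : E → E → Prop}
    (negtrans : ∀ x ∈ X, ∀ y ∈ X, r x y → ∀ z ∈ X, r x z ∨ r z y)
    (strconv : ∀ x ∈ X, ∀ x' ∈ X, x ≠ x' → ∀ θ ∈ Ioo (0:ℝ) 1,
      r (θ • x + (1 - θ) • x') x ∨ r (θ • x + (1 - θ) • x') x')
    (f : E →ₗ[ℝ] ℝ) {s t u : ℝ} {xs xt : E}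
    (hxs : xs ∈ X) (hfxs : f xs = s) (hxs_max : ∀ y ∈ X, f y = s → ¬ r y xs)
    (hxt : xt ∈ X) (hfxt : f xt = t) (hxt_max : ∀ y ∈ X, f y = t → ¬ r y xt)
    (hst : s ≠ t) (hu : u ∈ openSegment ℝ s t) :
    FibreRel X f r u s ∨ FibreRel X f r u t := by
  obtain ⟨θ, μ, hθ, hμ, hθμ, rfl⟩ := hu
  obtain rfl : μ = 1 - θ := by linarith
  have hne : xs ≠ xt := fun h => hst (by rw [← hfxs, ← hfxt, h])
  set z := θ • xs + (1 - θ) • xt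
  have hzX : z ∈ X := hX hxs hxt hθ.le hμ.le hθμ
  have hfz : f z = θ • s + (1 - θ) • t := by simp [z, hfxs, hfxt]
  have beats_fibre {c : ℝ} {xc : E} (hxc : xc ∈ X) (hmax : ∀ y ∈ X, f y = c → ¬ r y xc)
      (h : r z xc) : FibreRel X f r (θ • s + (1 - θ) • t) c :=
    ⟨z, hzX, hfz, fun y hy hfy => (negtrans z hzX xc hxc h y hy).resolve_right (hmax y hy hfy)⟩
  exact (strconv xs hxs xt hxt hne θ ⟨hθ, by linarith⟩).imp
    (beats_fibre hxs hxs_max) (beats_fibre hxt hxt_max)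

open Set in
/-- The induced relation `≻'` on `π₁(X) = [a,b]` is strictly convex. -/
theorem stmt_18 {n : ℕ} (hn : 2 ≤ n) (X : Set (EuclideanSpace ℝ (Fin n)))
    (hXconv : Convex ℝ X)
    (r : EuclideanSpace ℝ (Fin n) → EuclideanSpace ℝ (Fin n) → Prop)
    (asymm : ∀ x ∈ X, ∀ y ∈ X, r x y → ¬ r y x)
    (negtrans : ∀ x ∈ X, ∀ y ∈ X, r x y → ∀ z ∈ X, r x z ∨ r z y)
    (cont : IsOpen {p : X × X | r p.1.1 p.2.1})
    (strconv : ∀ x ∈ X, ∀ x' ∈ X, x ≠ x' → ∀ θ ∈ Ioo (0:ℝ) 1,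
      r (θ • x + (1 - θ) • x') x ∨ r (θ • x + (1 - θ) • x') x')
    (a b : ℝ)
    (hslice : ∀ s ∈ Icc a b, {x ∈ X | x ⟨0, by omega⟩ = s}.Nonempty ∧
      IsCompact {x ∈ X | x ⟨0, by omega⟩ = s} ∧ Convex ℝ {x ∈ X | x ⟨0, by omega⟩ = s}) :
    ∀ s ∈ Icc a b, ∀ t ∈ Icc a b, s ≠ t → ∀ u ∈ Ioo (min s t) (max s t),
      (∃ x ∈ X, x ⟨0, by omega⟩ = u ∧ ∀ y ∈ X, y ⟨0, by omega⟩ = s → r x y) ∨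
      (∃ x ∈ X, x ⟨0, by omega⟩ = u ∧ ∀ y ∈ X, y ⟨0, by omega⟩ = t → r x y) := by
  intro s hs t ht hst u hu
  have slice_max (c : ℝ) (hc : c ∈ Icc a b) :
      ∃ m ∈ {x ∈ X | x ⟨0, by omega⟩ = c}, ∀ y ∈ {x ∈ X | x ⟨0, by omega⟩ = c}, ¬ r y m :=
    (hslice c hc).2.1.exists_forall_not_rel_of_subset (fun _ hx => hx.1) (hslice c hc).1
      asymm negtrans cont
  obtain ⟨xs, ⟨hxs, hfxs⟩, hxs_max⟩ := slice_max s hs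
  obtain ⟨xt, ⟨hxt, hfxt⟩, hxt_max⟩ := slice_max t ht
  exact fibreRel_or_of_mem_openSegment hXconv negtrans strconv (EuclideanSpace.projₗ _)
    hxs hfxs (fun y hy hfy => hxs_max y ⟨hy, hfy⟩) hxt hfxt (fun y hy hfy => hxt_max y ⟨hy, hfy⟩)
    hst (openSegment_eq_Ioo' hst ▸ hu)
end
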